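/- Let E ∈ ℝ^{n×n} be symmetric, F, H ∈ ℝ^{m×n}, G ∈ ℝ^{m×m} symmetric, q ∈ ℝⁿ, r ∈ ℝᵐ, and let û ∈ ℝⁿ, p̂ ∈ ℝᵐ. Fix positive weights α₁, α₂, α₃, α₄, β₁, β₂. Set Q = q − Eû − Fᵀp̂, R = r − Hû − Gp̂, N₁ = J_S^n Φ_E D_{S,n}⁻¹, S₁ = J_S^m Φ_G D_{S,m}⁻¹. Define M₁^R = [α₁⁻¹(ûᵀ⊗Iₙ)N₁, α₂⁻¹(Iₙ⊗p̂ᵀ)Σ_F, 0_{n×mn}, 0_{n×m(m+1)/2}], M₂^R = [0_{m×n(n+1)/2}, 0_{m×mn}, α₃⁻¹(ûᵀ⊗I_m)Σ_H, α₄⁻¹(p̂ᵀ⊗I_m)S₁], Ĩ₁ = [−β₁⁻¹Iₙ, 0_{n×m}], Ĩ₂ = [0_{m×n}, −β₂⁻¹I_m], and M = [[M₁^R, Ĩ₁],[M₂^R, Ĩ₂]]. Then MMᵀ is invertible, and the sparsity-preserving structured backward error inf{ ζ^{σ₂}(ΔE⊙Θ_E, ΔF⊙Θ_F, ΔH⊙Θ_H,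 ΔG⊙Θ_G, Δq, Δr) : ΔE ∈ ℝ^{n×n} symmetric, ΔF, ΔH ∈ ℝ^{m×n}, ΔG ∈ ℝ^{m×m} symmetric, Δq ∈ ℝⁿ, Δr ∈ ℝᵐ, (E+ΔE⊙Θ_E)û + (F+ΔF⊙Θ_F)ᵀp̂ = q+Δq and (H+ΔH⊙Θ_H)û + (G+ΔG⊙Θ_G)p̂ = r+Δr } is attained and equals ‖Mᵀ(MMᵀ)⁻¹[Q; R]‖₂. -/

import Mathlib

/-!
Encode a perturbation as the vector `x = (α₁ D_S vec_S ΔE, α₂ vec ΔF, α₃ vec ΔH, α₄ D_S vec_S ΔG,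
β₁ Δq, β₂ Δr)`. For symmetric `ΔE`, `ΔG` the weight `D_S` makes `‖x‖₂ = ζ^{σ₂}`, and the
perturbed equations for the pattern-restricted perturbation read `M x = [Q; R]`. The block
`-diag(β₁⁻¹ I, β₂⁻¹ I)` gives `M` full row rank, so `x₀ = Mᵀ (M Mᵀ)⁻¹ [Q; R]` is the solution of
least norm, which bounds the backward error from below. It is attained: `M` only sees the
entries of `x` inside the sparsity pattern, so decoding `x₀` and restricting it to the pattern
gives an admissible perturbation whose encoding is `x₀` with some coordinates set to zero.
-/

open Matrix

noncomputable section

namespace GSPPBE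

/-- Entrywise real part of a complex matrix. -/
def reM {I J : Type*} (A : Matrix I J ℂ) : Matrix I J ℝ := A.map Complex.re

/-- Entrywise imaginary part of a complex matrix. -/
def imM {I J : Type*} (A : Matrix I J ℂ) : Matrix I J ℝ := A.map Complex.im

/-- Entrywise real part of a complex vector. -/
def reV {I : Type*} (v : I → ℂ) : I → ℝ := fun i => (v i).re

/-- Entrywise imaginary part of a complex vector. -/
def imV {I : Type*} (v : I → ℂ) : I → ℝ := fun i => (v i).im

/-- Frobenius norm of a matrix. -/
def frob {I J α : Type*} [Fintype I] [Fintype J] [SeminormedAddGroup α]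
    (A : Matrix I J α) : ℝ :=
  Real.sqrt (∑ i, ∑ j, ‖A i j‖ ^ 2)

/-- Euclidean norm of a (finitely indexed) vector. -/
def eunorm {I α : Type*} [Fintype I] [SeminormedAddGroup α] (v : I → α) : ℝ :=
  Real.sqrt (∑ i, ‖v i‖ ^ 2)

/-- Column-major vectorization: `vecM A (j, i) = A i j`. -/
def vecM {I J α : Type*} (A : Matrix I J α) : J × I → α := fun p => A p.2 p.1

/-- Index type for the lower triangle including the diagonal (positions of `vec_S`);
it has `m(m+1)/2` elements. -/
abbrev SymIdx (m : ℕ) := {p : Fin m × Fin m // p.2 ≤ p.1}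

/-- Index type for the strictly lower triangle (positions of `vec_SK`);
it has `m(m-1)/2` elements. -/
abbrev SkewIdx (m : ℕ) := {p : Fin m × Fin m // p.2 < p.1}

/-- `vec_S` of a (symmetric) matrix: its lower-triangular entries `Z i j`, `j ≤ i`. -/
def vecS {m : ℕ} {α : Type*} (Z : Matrix (Fin m) (Fin m) α) : SymIdx m → α :=
  fun p => Z p.1.1 p.1.2

/-- `vec_SK` of a (skew-symmetric) matrix: its strictly lower-triangular entries `Z i j`, `j < i`. -/
def vecSK {m : ℕ} {α : Type*} (Z : Matrix (Fin m) (Fin m) α) : SkewIdx m → α :=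
  fun p => Z p.1.1 p.1.2

/-- `J_S^m`: its column at position `(i,j)`, `j ≤ i`, is `vec(eᵢeⱼᵀ + eⱼeᵢᵀ)` for `i > j` and
`vec(eⱼeⱼᵀ)` for `i = j`.  Rows are vec positions `(column, row)`. -/
def JS (m : ℕ) : Matrix (Fin m × Fin m) (SymIdx m) ℝ :=
  Matrix.of fun cr p =>
    (if cr.2 = p.1.1 ∧ cr.1 = p.1.2 then (1 : ℝ) else 0) +
    (if p.1.1 ≠ p.1.2 ∧ cr.2 = p.1.2 ∧ cr.1 = p.1.1 then 1 else 0)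

/-- `J_SK^m`: its column at position `(i,j)`, `j < i`, is `vec(eᵢeⱼᵀ − eⱼeᵢᵀ)`. -/
def JSK (m : ℕ) : Matrix (Fin m × Fin m) (SkewIdx m) ℝ :=
  Matrix.of fun cr p =>
    (if cr.2 = p.1.1 ∧ cr.1 = p.1.2 then (1 : ℝ) else 0) -
    (if cr.2 = p.1.2 ∧ cr.1 = p.1.1 then 1 else 0)

open Classical in
/-- Sign pattern `Θ_X` of a matrix, with values in the same ring. -/
def theta {I J α : Type*} [Zero α] [One α] (X : Matrix I J α) : Matrix I J α :=
  Matrix.of fun i j => if X i j = 0 then 0 else 1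

open Classical in
/-- Real-valued sign pattern `Θ_X` of a matrix. -/
def thetaR {I J α : Type*} [Zero α] (X : Matrix I J α) : Matrix I J ℝ :=
  Matrix.of fun i j => if X i j = 0 then 0 else 1

/-- `Φ_X = diag(vec_S(Θ_X))`. -/
def Phi {m : ℕ} {α : Type*} [Zero α] (X : Matrix (Fin m) (Fin m) α) :
    Matrix (SymIdx m) (SymIdx m) ℝ :=
  Matrix.diagonal (vecS (thetaR X))

/-- `Ψ_X`: diagonal matrix listing the strictly lower-triangular entries of `Θ_X`
in `vec_SK` ordering. -/
def Psi {m : ℕ} {α : Type*} [Zero α] (X : Matrix (Fin m) (Fin m) α) :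
    Matrix (SkewIdx m) (SkewIdx m) ℝ :=
  Matrix.diagonal (vecSK (thetaR X))

/-- `Σ_X = diag(vec(Θ_X))`. -/
def Sig {I J α : Type*} [DecidableEq I] [DecidableEq J] [Zero α]
    (X : Matrix I J α) : Matrix (J × I) (J × I) ℝ :=
  Matrix.diagonal (vecM (thetaR X))

/-- `D_{S,m}`: diagonal entry `1` at the positions of diagonal entries `(j,j)`, `√2` elsewhere. -/
def DS (m : ℕ) : Matrix (SymIdx m) (SymIdx m) ℝ :=
  Matrix.diagonal fun p => if p.1.1 = p.1.2 then 1 else Real.sqrt 2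

/-- `D_{SK,m} = √2·I`. -/
def DSK (m : ℕ) : Matrix (SkewIdx m) (SkewIdx m) ℝ :=
  Matrix.diagonal fun _ => Real.sqrt 2

/-- `uᵀ ⊗ I_b`, viewed as a matrix acting on column-major vectorizations of `b×a` matrices. -/
def rowKronId {a b : ℕ} (u : Fin a → ℝ) : Matrix (Fin b) (Fin a × Fin b) ℝ :=
  Matrix.of fun r p => u p.1 * (if r = p.2 then 1 else 0)

/-- `I_a ⊗ vᵀ`, viewed as a matrix acting on column-major vectorizations of `b×a` matrices. -/
def idKronRow {a b : ℕ} (v : Fin b → ℝ) : Matrix (Fin a) (Fin a × Fin b) ℝ :=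
  Matrix.of fun r p => (if r = p.1 then 1 else 0) * v p.2

/-- The weighted norm `ζ^{σ₁}(A,B,C,q,r)`. -/
def zeta1 {n m : ℕ} {α : Type*} [SeminormedAddGroup α]
    (α₁ α₂ α₃ β₁ β₂ : ℝ)
    (A : Matrix (Fin n) (Fin n) α) (B : Matrix (Fin m) (Fin n) α)
    (C : Matrix (Fin m) (Fin m) α) (q : Fin n → α) (r : Fin m → α) : ℝ :=
  Real.sqrt (α₁ ^ 2 * frob A ^ 2 + α₂ ^ 2 * frob B ^ 2 + α₃ ^ 2 * frob C ^ 2 +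
    β₁ ^ 2 * eunorm q ^ 2 + β₂ ^ 2 * eunorm r ^ 2)

/-- The weighted norm `ζ^{σ₂}(A,B,H,C,q,r)`. -/
def zeta2 {n m : ℕ} {α : Type*} [SeminormedAddGroup α]
    (α₁ α₂ α₃ α₄ β₁ β₂ : ℝ)
    (A : Matrix (Fin n) (Fin n) α) (B : Matrix (Fin m) (Fin n) α)
    (H : Matrix (Fin m) (Fin n) α) (C : Matrix (Fin m) (Fin m) α)
    (q : Fin n → α) (r : Fin m → α) : ℝ :=
  Real.sqrt (α₁ ^ 2 * frob A ^ 2 + α₂ ^ 2 * frob B ^ 2 + α₃ ^ 2 * frob H ^ 2 +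
    α₄ ^ 2 * frob C ^ 2 + β₁ ^ 2 * eunorm q ^ 2 + β₂ ^ 2 * eunorm r ^ 2)

section Norms

variable {I J : Type*} [Fintype I] [Fintype J]

theorem eunorm_eq_sqrt_sum (v : I → ℝ) : eunorm v = √(∑ i, v i ^ 2) := by
  simp [eunorm]

theorem eunorm_eq_sqrt_dotProduct (v : I → ℝ) : eunorm v = √(v ⬝ᵥ v) := by
  simp [eunorm_eq_sqrt_sum, dotProduct, sq]

theorem eunorm_sq (v : I → ℝ) : eunorm v ^ 2 = ∑ i, v i ^ 2 := by
  rw [eunorm_eq_sqrt_sum, Real.sq_sqrt (by positivity)]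

theorem eunorm_le_eunorm {v w : I → ℝ} (h : ∀ i, v i ^ 2 ≤ w i ^ 2) : eunorm v ≤ eunorm w := by
  rw [eunorm_eq_sqrt_sum, eunorm_eq_sqrt_sum]
  exact Real.sqrt_le_sqrt (Finset.sum_le_sum fun i _ => h i)

theorem frob_sq (A : Matrix I J ℝ) : frob A ^ 2 = ∑ i, ∑ j, A i j ^ 2 := by
  simp only [frob, Real.norm_eq_abs, sq_abs]
  exact Real.sq_sqrt (by positivity)

theorem sum_vecM_sq (A : Matrix I J ℝ) : ∑ p, vecM A p ^ 2 = frob A ^ 2 := by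
  rw [frob_sq, Fintype.sum_prod_type, Finset.sum_comm]
  rfl

end Norms

section MinimumNorm

variable {K L : Type*} [Fintype K] [Fintype L] [DecidableEq K]

theorem isUnit_fromCols_mul_transpose (A : Matrix K L ℝ) {B : Matrix K K ℝ} (hB : IsUnit B) :
    IsUnit (fromCols A B * (fromCols A B)ᵀ) := by
  rw [transpose_fromCols, fromCols_mul_fromRows]
  have hBBt : (B * Bᵀ).PosDef := by
    simpa [conjTranspose_eq_transpose_of_trivial] using
      PosDef.mul_conjTranspose_self B (vecMul_injective_iff_isUnit.mpr hB)
  have hAAt : (A * Aᵀ).PosSemidef := by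
    simpa [conjTranspose_eq_transpose_of_trivial] using posSemidef_self_mul_conjTranspose A
  exact (PosDef.posSemidef_add hAAt hBBt).isUnit

variable {M : Matrix K L ℝ} (hM : IsUnit (M * Mᵀ))
include hM

theorem mulVec_pinv_mulVec (w : K → ℝ) : M *ᵥ ((Mᵀ * (M * Mᵀ)⁻¹) *ᵥ w) = w := by
  rw [mulVec_mulVec, ← Matrix.mul_assoc, mul_nonsing_inv _ ((isUnit_iff_isUnit_det _).mp hM),
    one_mulVec]

theorem eunorm_pinv_mulVec_le {w : K → ℝ} {x : L → ℝ} (hx : M *ᵥ x = w) :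
    eunorm ((Mᵀ * (M * Mᵀ)⁻¹) *ᵥ w) ≤ eunorm x := by
  set x₀ := (Mᵀ * (M * Mᵀ)⁻¹) *ᵥ w
  have hker : M *ᵥ (x - x₀) = 0 := by rw [mulVec_sub, hx, mulVec_pinv_mulVec hM, sub_self]
  -- `x₀` lies in the row space of `M`, hence is orthogonal to the kernel of `M`.
  have horth : ∀ z, M *ᵥ z = 0 → x₀ ⬝ᵥ z = 0 := by
    intro z hz
    rw [show x₀ = Mᵀ *ᵥ ((M * Mᵀ)⁻¹ *ᵥ w) from (mulVec_mulVec _ _ _).symm, mulVec_transpose,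
      ← dotProduct_mulVec, hz, dotProduct_zero]
  have hpyth : x ⬝ᵥ x = x₀ ⬝ᵥ x₀ + (x - x₀) ⬝ᵥ (x - x₀) := by
    have h := congrArg (fun y => y ⬝ᵥ y) (add_sub_cancel x₀ x)
    simp only [add_dotProduct, dotProduct_add, dotProduct_comm (x - x₀) x₀, horth _ hker] at h
    linarith
  rw [eunorm_eq_sqrt_dotProduct, eunorm_eq_sqrt_dotProduct]
  have hnonneg : 0 ≤ (x - x₀) ⬝ᵥ (x - x₀) := Finset.sum_nonneg fun i _ => mul_self_nonneg _
  exact Real.sqrt_le_sqrt (by linarith)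

theorem isLeast_eunorm_pinv_mulVec (w : K → ℝ) {T : Set ℝ}
    (hT : ∀ t ∈ T, ∃ x, M *ᵥ x = w ∧ eunorm x = t)
    (hsol : ∀ x, M *ᵥ x = w → ∃ t ∈ T, t ≤ eunorm x) :
    IsLeast T (eunorm ((Mᵀ * (M * Mᵀ)⁻¹) *ᵥ w)) := by
  have hlower : ∀ t ∈ T, eunorm ((Mᵀ * (M * Mᵀ)⁻¹) *ᵥ w) ≤ t := by
    intro t ht
    obtain ⟨x, hx, rfl⟩ := hT t ht
    exact eunorm_pinv_mulVec_le hM hx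
  obtain ⟨t, ht, hle⟩ := hsol _ (mulVec_pinv_mulVec hM w)
  exact ⟨le_antisymm hle (hlower t ht) ▸ ht, hlower⟩

end MinimumNorm

section SparsityPattern

variable {I J : Type*}

theorem theta_eq_thetaR (X : Matrix I J ℝ) : theta X = thetaR X := by
  ext i j
  simp [theta, thetaR]

theorem hadamard_theta_hadamard_theta (A X : Matrix I J ℝ) :
    (A ⊙ theta X) ⊙ theta X = A ⊙ theta X := by
  ext i j
  by_cases h : X i j = 0 <;> simp [theta, h]

theorem thetaR_mul_sq_le {α : Type*} [Zero α] (X : Matrix I J α) (i : I) (j : J) (c : ℝ) :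
    (thetaR X i j * c) ^ 2 ≤ c ^ 2 := by
  by_cases h : X i j = 0 <;> simp [thetaR, h, sq_nonneg]

theorem isSymm_hadamard_theta {m : ℕ} {A X : Matrix (Fin m) (Fin m) ℝ} (hA : A.IsSymm)
    (hX : X.IsSymm) : (A ⊙ theta X).IsSymm := by
  ext i j
  simp [theta, hA.apply i j, hX.apply i j]

end SparsityPattern

section Vectorization

variable {a b : ℕ}

def unvec (z : Fin a × Fin b → ℝ) : Matrix (Fin b) (Fin a) ℝ := of fun i j => z (j, i)

theorem unvec_vecM (A : Matrix (Fin b) (Fin a) ℝ) : unvec (vecM A) = A := rfl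

theorem unvec_smul (c : ℝ) (z : Fin a × Fin b → ℝ) : unvec (c • z) = c • unvec z := rfl

theorem vecM_smul (c : ℝ) (A : Matrix (Fin b) (Fin a) ℝ) : vecM (c • A) = c • vecM A := rfl

theorem rowKronId_mulVec_vecM (u : Fin a → ℝ) (A : Matrix (Fin b) (Fin a) ℝ) :
    rowKronId u *ᵥ vecM A = A *ᵥ u := by
  ext r
  simp [mulVec, dotProduct, rowKronId, vecM, Fintype.sum_prod_type, mul_comm]

theorem idKronRow_mulVec_vecM (v : Fin b → ℝ) (B : Matrix (Fin b) (Fin a) ℝ) :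
    idKronRow v *ᵥ vecM B = Bᵀ *ᵥ v := by
  ext r
  simp [mulVec, dotProduct, idKronRow, vecM, Fintype.sum_prod_type, mul_comm]

theorem Sig_mulVec_vecM (X A : Matrix (Fin b) (Fin a) ℝ) :
    Sig X *ᵥ vecM A = vecM (A ⊙ theta X) := by
  ext p
  simp [Sig, mulVec_diagonal, vecM, theta_eq_thetaR, mul_comm]

theorem vecM_unvec_hadamard_theta (z : Fin a × Fin b → ℝ) (X : Matrix (Fin b) (Fin a) ℝ)
    (p : Fin a × Fin b) : vecM (unvec z ⊙ theta X) p = thetaR X p.2 p.1 * z p := by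
  simp [vecM, unvec, theta_eq_thetaR, mul_comm]

theorem mulVec_rowKronId_Sig (X : Matrix (Fin b) (Fin a) ℝ) (u : Fin a → ℝ)
    (z : Fin a × Fin b → ℝ) :
    (rowKronId (b := b) u * Sig X) *ᵥ z = (unvec z ⊙ theta X) *ᵥ u := by
  rw [← mulVec_mulVec]
  exact (congrArg _ (Sig_mulVec_vecM X (unvec z))).trans (rowKronId_mulVec_vecM u _)

theorem mulVec_idKronRow_Sig (X : Matrix (Fin b) (Fin a) ℝ) (v : Fin b → ℝ)
    (z : Fin a × Fin b → ℝ) :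
    (idKronRow (a := a) v * Sig X) *ᵥ z = (unvec z ⊙ theta X)ᵀ *ᵥ v := by
  rw [← mulVec_mulVec]
  exact (congrArg _ (Sig_mulVec_vecM X (unvec z))).trans (idKronRow_mulVec_vecM v _)

end Vectorization

section SymmetricCoordinates

variable {m : ℕ}

def symOf (z : SymIdx m → ℝ) : Matrix (Fin m) (Fin m) ℝ :=
  of fun i j => if h : j ≤ i then z ⟨(i, j), h⟩ else z ⟨(j, i), (not_le.mp h).le⟩

def svec (A : Matrix (Fin m) (Fin m) ℝ) : SymIdx m → ℝ := DS m *ᵥ vecS A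

def unsvec (z : SymIdx m → ℝ) : Matrix (Fin m) (Fin m) ℝ := symOf ((DS m)⁻¹ *ᵥ z)

theorem symOf_isSymm (z : SymIdx m → ℝ) : (symOf z).IsSymm := by
  ext i j
  simp only [transpose_apply, symOf, of_apply]
  rcases lt_trichotomy i j with h | rfl | h
  · simp [h.le, h.not_ge]
  · rfl
  · simp [h.le, h.not_ge]

theorem vecS_symOf (z : SymIdx m → ℝ) : vecS (symOf z) = z := by
  ext ⟨⟨i, j⟩, h⟩
  simp [vecS, symOf, h]

theorem symOf_vecS {A : Matrix (Fin m) (Fin m) ℝ} (hA : A.IsSymm) : symOf (vecS A) = A := by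
  ext i j
  by_cases h : j ≤ i
  · simp [symOf, vecS, h]
  · simp [symOf, vecS, h, hA.apply i j]

theorem Phi_mulVec_vecS (X A : Matrix (Fin m) (Fin m) ℝ) :
    Phi X *ᵥ vecS A = vecS (A ⊙ theta X) := by
  ext p
  simp [Phi, mulVec_diagonal, vecS, theta_eq_thetaR, mul_comm]

theorem JS_mulVec_vecS {A : Matrix (Fin m) (Fin m) ℝ} (hA : A.IsSymm) :
    JS m *ᵥ vecS A = vecM A := by
  ext ⟨j, i⟩
  simp only [mulVec, dotProduct, JS, vecS, vecM, of_apply, add_mul]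
  rcases le_or_gt j i with h | h
  · rw [Fintype.sum_eq_single (⟨(i, j), h⟩ : SymIdx m)]
    · by_cases hij : i = j <;> simp [hij]
    · rintro ⟨⟨a, b⟩, hba⟩ hne
      have h₁ : ¬(i = a ∧ j = b) := by
        rintro ⟨rfl, rfl⟩; exact hne rfl
      have h₂ : ¬(a ≠ b ∧ i = b ∧ j = a) := by
        rintro ⟨hab, rfl, rfl⟩; exact hab (le_antisymm hba h).symm
      simp [h₁, h₂]
  · rw [Fintype.sum_eq_single (⟨(j, i), h.le⟩ : SymIdx m)]
    · simp [h.ne, h.ne', hA.apply i j]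
    · rintro ⟨⟨a, b⟩, hba⟩ hne
      have h₁ : ¬(i = a ∧ j = b) := by
        rintro ⟨rfl, rfl⟩; exact absurd hba (not_le.mpr h)
      have h₂ : ¬(a ≠ b ∧ i = b ∧ j = a) := by
        rintro ⟨-, rfl, rfl⟩; exact hne rfl
      simp [h₁, h₂]

theorem isUnit_det_DS (m : ℕ) : IsUnit (DS m).det := by
  rw [← isUnit_iff_isUnit_det, DS, isUnit_diagonal, Pi.isUnit_iff]
  intro p
  split_ifs <;> simp

theorem unsvec_isSymm (z : SymIdx m → ℝ) : (unsvec z).IsSymm := symOf_isSymm _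

theorem svec_unsvec (z : SymIdx m → ℝ) : svec (unsvec z) = z := by
  rw [svec, unsvec, vecS_symOf, mulVec_mulVec, mul_nonsing_inv _ (isUnit_det_DS m), one_mulVec]

theorem unsvec_svec {A : Matrix (Fin m) (Fin m) ℝ} (hA : A.IsSymm) : unsvec (svec A) = A := by
  rw [svec, unsvec, mulVec_mulVec, nonsing_inv_mul _ (isUnit_det_DS m), one_mulVec, symOf_vecS hA]

theorem unsvec_smul (c : ℝ) (z : SymIdx m → ℝ) : unsvec (c • z) = c • unsvec z := by
  ext i j
  by_cases h : j ≤ i <;> simp [unsvec, symOf, mulVec_smul, h]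

theorem svec_smul (c : ℝ) (A : Matrix (Fin m) (Fin m) ℝ) : svec (c • A) = c • svec A := by
  rw [svec, svec, ← mulVec_smul]
  rfl

theorem svec_hadamard_theta (A X : Matrix (Fin m) (Fin m) ℝ) :
    svec (A ⊙ theta X) = Phi X *ᵥ svec A := by
  rw [svec, svec, ← Phi_mulVec_vecS, DS, Phi, mulVec_mulVec, mulVec_mulVec, diagonal_mul_diagonal,
    diagonal_mul_diagonal]
  simp_rw [mul_comm]

theorem svec_unsvec_hadamard_theta (z : SymIdx m → ℝ) (X : Matrix (Fin m) (Fin m) ℝ)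
    (p : SymIdx m) : svec (unsvec z ⊙ theta X) p = thetaR X p.1.1 p.1.2 * z p := by
  rw [svec_hadamard_theta, svec_unsvec, Phi, mulVec_diagonal, vecS]

theorem sum_svec_sq {A : Matrix (Fin m) (Fin m) ℝ} (hA : A.IsSymm) :
    ∑ p, svec A p ^ 2 = frob A ^ 2 := by
  let g : Fin m × Fin m → ℝ := fun x =>
    if x.2 ≤ x.1 then (if x.1 = x.2 then 1 else 2) * A x.1 x.2 ^ 2 else 0
  have hsub : ∑ p, svec A p ^ 2 = ∑ x, g x := by
    refine Fintype.sum_of_injective Subtype.val Subtype.val_injective _ _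
      (fun x hx => if_neg fun h => hx ⟨⟨x, h⟩, rfl⟩) fun p => ?_
    simp only [svec, DS, mulVec_diagonal, vecS, g, if_pos p.2]
    split_ifs <;> simp [mul_pow]
  have hswap : ∑ x : Fin m × Fin m, g x.swap = ∑ x, g x :=
    Fintype.sum_equiv (Equiv.prodComm _ _) _ _ fun _ => rfl
  -- The weight `2` of an off-diagonal entry of the lower triangle is shared by the two
  -- positions of that entry in the symmetric matrix.
  have hpair : ∀ x : Fin m × Fin m, g x + g x.swap = 2 * A x.1 x.2 ^ 2 := by
    rintro ⟨i, j⟩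
    rcases lt_trichotomy i j with h | rfl | h
    · simp [g, h.le, h.not_ge, h.ne', hA.apply i j]
    · norm_num [g]; ring
    · simp [g, h.le, h.not_ge, h.ne']
  have htotal : ∑ x, (g x + g x.swap) = ∑ x : Fin m × Fin m, 2 * A x.1 x.2 ^ 2 :=
    Fintype.sum_congr _ _ hpair
  rw [Finset.sum_add_distrib, hswap, ← Finset.mul_sum] at htotal
  rw [hsub, frob_sq, ← Fintype.sum_prod_type']
  linarith

theorem mulVec_rowKronId_JS_Phi {X : Matrix (Fin m) (Fin m) ℝ} (hX : X.IsSymm)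
    (u : Fin m → ℝ) (z : SymIdx m → ℝ) :
    (rowKronId (b := m) u * (JS m * Phi X * (DS m)⁻¹)) *ᵥ z = (unsvec z ⊙ theta X) *ᵥ u := by
  rw [← mulVec_mulVec, ← mulVec_mulVec, ← mulVec_mulVec, ← vecS_symOf ((DS m)⁻¹ *ᵥ z),
    Phi_mulVec_vecS, JS_mulVec_vecS (isSymm_hadamard_theta (symOf_isSymm _) hX),
    rowKronId_mulVec_vecM]
  rfl

end SymmetricCoordinates

abbrev Coords (n m : ℕ) :=
  (SymIdx n ⊕ ((Fin n × Fin m) ⊕ ((Fin n × Fin m) ⊕ SymIdx m))) ⊕ (Fin n ⊕ Fin m)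

structure Perturbation (n m : ℕ) where
  E : Matrix (Fin n) (Fin n) ℝ
  F : Matrix (Fin m) (Fin n) ℝ
  H : Matrix (Fin m) (Fin n) ℝ
  G : Matrix (Fin m) (Fin m) ℝ
  q : Fin n → ℝ
  r : Fin m → ℝ

namespace Perturbation

variable {n m : ℕ}

def IsSymm (Δ : Perturbation n m) : Prop := Δ.E.IsSymm ∧ Δ.G.IsSymm

def mask (E : Matrix (Fin n) (Fin n) ℝ) (F H : Matrix (Fin m) (Fin n) ℝ)
    (G : Matrix (Fin m) (Fin m) ℝ) (Δ : Perturbation n m) : Perturbation n m :=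
  ⟨Δ.E ⊙ theta E, Δ.F ⊙ theta F, Δ.H ⊙ theta H, Δ.G ⊙ theta G, Δ.q, Δ.r⟩

/-- The residual of `(û, p̂)` for the data perturbed by `Δ` is `[Q; R]` minus this vector. -/
def residualReduction (uh : Fin n → ℝ) (ph : Fin m → ℝ) (Δ : Perturbation n m) :
    Fin n ⊕ Fin m → ℝ :=
  Sum.elim (Δ.E *ᵥ uh + Δ.Fᵀ *ᵥ ph - Δ.q) (Δ.H *ᵥ uh + Δ.G *ᵥ ph - Δ.r)

theorem mask_mask (E : Matrix (Fin n) (Fin n) ℝ) (F H : Matrix (Fin m) (Fin n) ℝ)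
    (G : Matrix (Fin m) (Fin m) ℝ) (Δ : Perturbation n m) :
    (Δ.mask E F H G).mask E F H G = Δ.mask E F H G := by
  simp only [mask, hadamard_theta_hadamard_theta]

theorem IsSymm.mask {E : Matrix (Fin n) (Fin n) ℝ} (hE : E.IsSymm) (F H : Matrix (Fin m) (Fin n) ℝ)
    {G : Matrix (Fin m) (Fin m) ℝ} (hG : G.IsSymm) {Δ : Perturbation n m} (hΔ : Δ.IsSymm) :
    (Δ.mask E F H G).IsSymm :=
  ⟨isSymm_hadamard_theta hΔ.1 hE, isSymm_hadamard_theta hΔ.2 hG⟩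

theorem residualReduction_eq_iff (E : Matrix (Fin n) (Fin n) ℝ) (F H : Matrix (Fin m) (Fin n) ℝ)
    (G : Matrix (Fin m) (Fin m) ℝ) (q : Fin n → ℝ) (r : Fin m → ℝ) (uh : Fin n → ℝ)
    (ph : Fin m → ℝ) (Δ : Perturbation n m) :
    Δ.residualReduction uh ph = Sum.elim (q - E *ᵥ uh - Fᵀ *ᵥ ph) (r - H *ᵥ uh - G *ᵥ ph) ↔
      (E + Δ.E) *ᵥ uh + (F + Δ.F)ᵀ *ᵥ ph = q + Δ.q ∧
        (H + Δ.H) *ᵥ uh + (G + Δ.G) *ᵥ ph = r + Δ.r := by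
  rw [residualReduction, Sum.elim_eq_iff, transpose_add, add_mulVec, add_mulVec, add_mulVec,
    add_mulVec]
  refine and_congr ?_ ?_ <;> constructor <;> intro h <;> rw [← sub_eq_zero] at h ⊢ <;>
    rw [← h] <;> abel

section Weights

variable (α₁ α₂ α₃ α₄ β₁ β₂ : ℝ)

def encode (Δ : Perturbation n m) : Coords n m → ℝ :=
  Sum.elim (Sum.elim (α₁ • svec Δ.E)
      (Sum.elim (α₂ • vecM Δ.F) (Sum.elim (α₃ • vecM Δ.H) (α₄ • svec Δ.G))))
    (Sum.elim (β₁ • Δ.q) (β₂ • Δ.r))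

def decode (x : Coords n m → ℝ) : Perturbation n m :=
  ⟨α₁⁻¹ • unsvec fun p => x (.inl (.inl p)),
    α₂⁻¹ • unvec fun p => x (.inl (.inr (.inl p))),
    α₃⁻¹ • unvec fun p => x (.inl (.inr (.inr (.inl p)))),
    α₄⁻¹ • unsvec fun p => x (.inl (.inr (.inr (.inr p)))),
    β₁⁻¹ • fun i => x (.inr (.inl i)),
    β₂⁻¹ • fun i => x (.inr (.inr i))⟩

theorem decode_isSymm (x : Coords n m → ℝ) : (decode α₁ α₂ α₃ α₄ β₁ β₂ x).IsSymm :=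
  ⟨(unsvec_isSymm _).smul _, (unsvec_isSymm _).smul _⟩

variable {α₁ α₂ α₃ α₄ β₁ β₂}

theorem decode_encode (hα₁ : α₁ ≠ 0) (hα₂ : α₂ ≠ 0) (hα₃ : α₃ ≠ 0) (hα₄ : α₄ ≠ 0)
    (hβ₁ : β₁ ≠ 0) (hβ₂ : β₂ ≠ 0) {Δ : Perturbation n m} (hΔ : Δ.IsSymm) :
    decode α₁ α₂ α₃ α₄ β₁ β₂ (encode α₁ α₂ α₃ α₄ β₁ β₂ Δ) = Δ := by
  obtain ⟨E, F, H, G, q, r⟩ := Δ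
  obtain ⟨hE, hG⟩ := hΔ
  simp only [decode, encode, Sum.elim_inl, Sum.elim_inr, unsvec_smul, unvec_smul, unvec_vecM,
    unsvec_svec hE, unsvec_svec hG, inv_smul_smul₀ hα₁, inv_smul_smul₀ hα₂, inv_smul_smul₀ hα₃,
    inv_smul_smul₀ hα₄, inv_smul_smul₀ hβ₁, inv_smul_smul₀ hβ₂]

theorem eunorm_encode {Δ : Perturbation n m} (hΔ : Δ.IsSymm) :
    eunorm (encode α₁ α₂ α₃ α₄ β₁ β₂ Δ) = zeta2 α₁ α₂ α₃ α₄ β₁ β₂ Δ.E Δ.F Δ.H Δ.G Δ.q Δ.r := by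
  rw [zeta2, eunorm_eq_sqrt_sum]
  congr 1
  simp only [encode, Fintype.sum_sum_type, Sum.elim_inl, Sum.elim_inr, Pi.smul_apply, smul_eq_mul,
    mul_pow, ← Finset.mul_sum, sum_svec_sq hΔ.1, sum_svec_sq hΔ.2, sum_vecM_sq, eunorm_sq]
  ring

/-- Decoding `x` and restricting it to the sparsity pattern only sets some coordinates of `x`
to zero. -/
theorem eunorm_encode_mask_decode_le (hα₁ : α₁ ≠ 0) (hα₂ : α₂ ≠ 0) (hα₃ : α₃ ≠ 0)
    (hα₄ : α₄ ≠ 0) (hβ₁ : β₁ ≠ 0) (hβ₂ : β₂ ≠ 0) (E : Matrix (Fin n) (Fin n) ℝ)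
    (F H : Matrix (Fin m) (Fin n) ℝ) (G : Matrix (Fin m) (Fin m) ℝ) (x : Coords n m → ℝ) :
    eunorm (encode α₁ α₂ α₃ α₄ β₁ β₂ ((decode α₁ α₂ α₃ α₄ β₁ β₂ x).mask E F H G)) ≤ eunorm x := by
  refine eunorm_le_eunorm ?_
  rintro ((p | p | p | p) | i | i) <;>
    simp only [encode, decode, mask, Sum.elim_inl, Sum.elim_inr, smul_hadamard, svec_smul,
      vecM_smul, Pi.smul_apply, smul_eq_mul, mul_inv_cancel_left₀, svec_unsvec_hadamard_theta,
      vecM_unvec_hadamard_theta, hα₁, hα₂, hα₃, hα₄, hβ₁, hβ₂, ne_eq, not_false_eq_true]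
  all_goals first | exact thetaR_mul_sq_le _ _ _ _ | exact le_rfl

end Weights

end Perturbation

open Perturbation

section BackwardErrorMatrix

variable {n m : ℕ} (E : Matrix (Fin n) (Fin n) ℝ) (F H : Matrix (Fin m) (Fin n) ℝ)
  (G : Matrix (Fin m) (Fin m) ℝ) (uh : Fin n → ℝ) (ph : Fin m → ℝ) (α₁ α₂ α₃ α₄ β₁ β₂ : ℝ)

/-- The matrix `M` of the theorem. Without the named arguments `(b := _)`, `(a := _)` the
products would elaborate through the type synonym `CStarMatrix` (as they do in the theorem),
which `rw` with the `Matrix` lemmas cannot see through. -/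
def backwardErrorMatrix : Matrix (Fin n ⊕ Fin m) (Coords n m) ℝ :=
  fromBlocks
    (fromCols (α₁⁻¹ • (rowKronId (b := n) uh * (JS n * Phi E * (DS n)⁻¹)))
      (fromCols (α₂⁻¹ • (idKronRow (a := n) ph * Sig F)) 0))
    (fromCols ((-(β₁⁻¹)) • (1 : Matrix (Fin n) (Fin n) ℝ)) 0)
    (fromCols 0 (fromCols 0 (fromCols (α₃⁻¹ • (rowKronId (b := m) uh * Sig H))
      (α₄⁻¹ • (rowKronId (b := m) ph * (JS m * Phi G * (DS m)⁻¹))))))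
    (fromCols 0 ((-(β₂⁻¹)) • (1 : Matrix (Fin m) (Fin m) ℝ)))

theorem isUnit_backwardErrorMatrix_mul_transpose (hβ₁ : β₁ ≠ 0) (hβ₂ : β₂ ≠ 0) :
    IsUnit (backwardErrorMatrix E F H G uh ph α₁ α₂ α₃ α₄ β₁ β₂ *
      (backwardErrorMatrix E F H G uh ph α₁ α₂ α₃ α₄ β₁ β₂)ᵀ) := by
  rw [backwardErrorMatrix, ← fromCols_fromRows_eq_fromBlocks]
  refine isUnit_fromCols_mul_transpose _ ?_
  rw [fromRows_fromCols_eq_fromBlocks, smul_one_eq_diagonal, smul_one_eq_diagonal,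
    fromBlocks_diagonal, isUnit_diagonal, Pi.isUnit_iff]
  rintro (i | i) <;> simp [hβ₁, hβ₂]

variable {E G} in
theorem backwardErrorMatrix_mulVec (hE : E.IsSymm) (hG : G.IsSymm) (x : Coords n m → ℝ) :
    backwardErrorMatrix E F H G uh ph α₁ α₂ α₃ α₄ β₁ β₂ *ᵥ x =
      ((decode α₁ α₂ α₃ α₄ β₁ β₂ x).mask E F H G).residualReduction uh ph := by
  obtain ⟨zE, zF, zH, zG, zq, zr, rfl⟩ : ∃ zE zF zH zG zq zr,
      x = Sum.elim (Sum.elim zE (Sum.elim zF (Sum.elim zH zG))) (Sum.elim zq zr) :=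
    ⟨_, _, _, _, _, _, by ext ((p | p | p | p) | i | i) <;> rfl⟩
  simp only [backwardErrorMatrix, fromBlocks_mulVec, Sum.elim_comp_inl, Sum.elim_comp_inr,
    fromCols_mulVec_sumElim, smul_mulVec, mulVec_rowKronId_JS_Phi hE, mulVec_rowKronId_JS_Phi hG,
    mulVec_idKronRow_Sig, mulVec_rowKronId_Sig, one_mulVec, zero_mulVec, residualReduction,
    decode, mask, Sum.elim_inl, Sum.elim_inr, smul_hadamard, transpose_smul]
  congr 1 <;> module

end BackwardErrorMatrix

/-- Corollary 3.9: sparsity-preserving structured backward error for the real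
GSPP with `E` symmetric, `F ≠ H` general, `G` symmetric. -/
theorem structured_BE_real_case_e
    (n m : ℕ) (E : Matrix (Fin n) (Fin n) ℝ) (hE : E.IsSymm)
    (F H : Matrix (Fin m) (Fin n) ℝ) (G : Matrix (Fin m) (Fin m) ℝ) (hG : G.IsSymm)
    (q : Fin n → ℝ) (r : Fin m → ℝ) (uh : Fin n → ℝ) (ph : Fin m → ℝ)
    (α₁ α₂ α₃ α₄ β₁ β₂ : ℝ)
    (hα₁ : 0 < α₁) (hα₂ : 0 < α₂) (hα₃ : 0 < α₃) (hα₄ : 0 < α₄)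
    (hβ₁ : 0 < β₁) (hβ₂ : 0 < β₂) :
    let Q : Fin n → ℝ := q - E *ᵥ uh - Fᵀ *ᵥ ph
    let R : Fin m → ℝ := r - H *ᵥ uh - G *ᵥ ph
    let N₁ := JS n * Phi E * (DS n)⁻¹
    let S₁ := JS m * Phi G * (DS m)⁻¹
    let M₁ : Matrix (Fin n)
        (SymIdx n ⊕ ((Fin n × Fin m) ⊕ ((Fin n × Fin m) ⊕ SymIdx m))) ℝ :=
      fromCols (α₁⁻¹ • (rowKronId uh * N₁))
        (fromCols (α₂⁻¹ • (idKronRow ph * Sig F)) 0)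
    let M₂ : Matrix (Fin m)
        (SymIdx n ⊕ ((Fin n × Fin m) ⊕ ((Fin n × Fin m) ⊕ SymIdx m))) ℝ :=
      fromCols 0
        (fromCols 0
          (fromCols (α₃⁻¹ • (rowKronId uh * Sig H)) (α₄⁻¹ • (rowKronId ph * S₁))))
    let I₁ : Matrix (Fin n) (Fin n ⊕ Fin m) ℝ :=
      fromCols ((-(β₁⁻¹)) • (1 : Matrix (Fin n) (Fin n) ℝ)) 0
    let I₂ : Matrix (Fin m) (Fin n ⊕ Fin m) ℝ :=
      fromCols 0 ((-(β₂⁻¹)) • (1 : Matrix (Fin m) (Fin m) ℝ))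
    let M := fromBlocks M₁ I₁ M₂ I₂
    let w : Fin n ⊕ Fin m → ℝ := Sum.elim Q R
    IsUnit (M * Mᵀ) ∧
      IsLeast
        {t : ℝ | ∃ (ΔE : Matrix (Fin n) (Fin n) ℝ) (ΔF ΔH : Matrix (Fin m) (Fin n) ℝ)
            (ΔG : Matrix (Fin m) (Fin m) ℝ) (Δq : Fin n → ℝ) (Δr : Fin m → ℝ),
            ΔE.IsSymm ∧ ΔG.IsSymm ∧
            (E + ΔE.hadamard (theta E)) *ᵥ uh + (F + ΔF.hadamard (theta F))ᵀ *ᵥ ph = q + Δq ∧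
            (H + ΔH.hadamard (theta H)) *ᵥ uh + (G + ΔG.hadamard (theta G)) *ᵥ ph = r + Δr ∧
            t = zeta2 α₁ α₂ α₃ α₄ β₁ β₂ (ΔE.hadamard (theta E)) (ΔF.hadamard (theta F))
                  (ΔH.hadamard (theta H)) (ΔG.hadamard (theta G)) Δq Δr}
        (eunorm ((Mᵀ * (M * Mᵀ)⁻¹) *ᵥ w)) := by
  intro Q R N₁ S₁ M₁ M₂ I₁ I₂ M w
  have hM : IsUnit (M * Mᵀ) :=
    isUnit_backwardErrorMatrix_mul_transpose E F H G uh ph α₁ α₂ α₃ α₄ β₁ β₂ hβ₁.ne' hβ₂.ne'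
  have hMx : ∀ x, M *ᵥ x = ((decode α₁ α₂ α₃ α₄ β₁ β₂ x).mask E F H G).residualReduction uh ph :=
    backwardErrorMatrix_mulVec F H uh ph α₁ α₂ α₃ α₄ β₁ β₂ hE hG
  refine ⟨hM, isLeast_eunorm_pinv_mulVec hM w ?_ ?_⟩
  · rintro t ⟨ΔE, ΔF, ΔH, ΔG, Δq, Δr, hΔE, hΔG, hsys₁, hsys₂, rfl⟩
    set Δ : Perturbation n m := ⟨ΔE, ΔF, ΔH, ΔG, Δq, Δr⟩
    have hΔ : (Δ.mask E F H G).IsSymm := IsSymm.mask hE F H hG ⟨hΔE, hΔG⟩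
    refine ⟨encode α₁ α₂ α₃ α₄ β₁ β₂ (Δ.mask E F H G), ?_, eunorm_encode hΔ⟩
    rw [hMx, decode_encode hα₁.ne' hα₂.ne' hα₃.ne' hα₄.ne' hβ₁.ne' hβ₂.ne' hΔ, mask_mask]
    exact (residualReduction_eq_iff E F H G q r uh ph _).2 ⟨hsys₁, hsys₂⟩
  · intro x hx
    set Δ := decode α₁ α₂ α₃ α₄ β₁ β₂ x
    have hΔ : Δ.IsSymm := decode_isSymm α₁ α₂ α₃ α₄ β₁ β₂ x
    obtain ⟨hsys₁, hsys₂⟩ := (residualReduction_eq_iff E F H G q r uh ph _).1 ((hMx x).symm.trans hx)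
    refine ⟨_, ⟨Δ.E, Δ.F, Δ.H, Δ.G, Δ.q, Δ.r, hΔ.1, hΔ.2, hsys₁, hsys₂, rfl⟩,
      (eunorm_encode (hΔ.mask hE F H hG)).symm.trans_le ?_⟩
    exact eunorm_encode_mask_decode_le hα₁.ne' hα₂.ne' hα₃.ne' hα₄.ne' hβ₁.ne' hβ₂.ne' E F H G x

end GSPPBE
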